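/- arXiv:1504.02444 — 2 statements merged into one kernel-verified Lean document; each statement's English description precedes it below -/
import Mathlib

section
/- For a complete observable FSM S with states s1 and s2, the pair (s1, s2) is adaptively homing if and only if the intersection FSM S/s1 ∩ S/s2 has no complete submachine, i.e., every submachine has some state at which some input is undefined. -/
/-- A (non-initialized) finite state machine with transition relation `h ⊆ S × I × O × S`. -/
structure FSM (S I O : Type) where
  h : S → I → O → S → Prop

namespace FSM

variable {S I O Q : Type}

/-- `M` is complete: every input is defined at every state. -/
def Complete (M : FSM S I O) : Prop := ∀ s i, ∃ o s', M.h s i o s'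

/-- `M` is observable: the `io`-successor of a state is unique when it exists. -/
def Observable (M : FSM S I O) : Prop :=
  ∀ s i o t₁ t₂, M.h s i o t₁ → M.h s i o t₂ → t₁ = t₂

/-- `M.Runs s γ t` : `t` is reached from `s` along the trace `γ` (a list of input/output pairs). -/
inductive Runs (M : FSM S I O) : S → List (I × O) → S → Prop
  | nil (s : S) : Runs M s [] s
  | cons {s : S} {i : I} {o : O} {s' : S} {γ : List (I × O)} {t : S} :
      M.h s i o s' → Runs M s' γ t → Runs M s ((i, o) :: γ) t

/-- A deadlock state has no outgoing transitions. -/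
def Deadlock (M : FSM S I O) (q : S) : Prop := ∀ i o q', ¬ M.h q i o q'

/-- A test case: initially connected, single-input, output-complete, observable,
acyclic initialized FSM. -/
structure IsTestCase (P : FSM Q I O) (q0 : Q) : Prop where
  singleInput : ∀ q i₁ o₁ q₁ i₂ o₂ q₂, P.h q i₁ o₁ q₁ → P.h q i₂ o₂ q₂ → i₁ = i₂
  outputComplete : ∀ q i o q', P.h q i o q' → ∀ o', ∃ q'', P.h q i o' q''
  observable : P.Observable
  acyclic : ∀ q γ, γ ≠ ([] : List (I × O)) → ¬ P.Runs q γ q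
  connected : ∀ q, ∃ γ, P.Runs q0 γ q

/-- `P` (with initial state `q0`) is a homing test case for the set `S'` of states of `M`:
for every trace from `q0` to a deadlock state, the successors of all states of `S'`,
where they exist, coincide in a single state. -/
def IsHomingFor (M : FSM S I O) (S' : Set S) (P : FSM Q I O) (q0 : Q) : Prop :=
  ∀ γ q, P.Runs q0 γ q → P.Deadlock q →
    ∃ s : S, ∀ s' ∈ S', ∀ t, M.Runs s' γ t → t = s

/-- The set `S'` of states of `M` is adaptively homing: some (finite) homing test case exists. -/
def AdaptivelyHomingSet (M : FSM S I O) (S' : Set S) : Prop :=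
  ∃ (Q : Type) (_ : Fintype Q) (P : FSM Q I O) (q0 : Q),
    P.IsTestCase q0 ∧ IsHomingFor M S' P q0

/-- The pair `(s₁, s₂)` is adaptively homing. -/
def AdaptivelyHomingPair (M : FSM S I O) (s₁ s₂ : S) : Prop :=
  AdaptivelyHomingSet M {s₁, s₂}

/-- The intersection FSM `S/s₁ ∩ S/s₂`: states are pairs of states of `M`, and there is a
transition iff both components have the corresponding transition and the successors differ. -/
def inter (M : FSM S I O) : FSM (S × S) I O :=
  ⟨fun p i o p' => M.h p.1 i o p'.1 ∧ M.h p.2 i o p'.2 ∧ p'.1 ≠ p'.2⟩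

/-- A set `A` of states is input-closed in `M`: from every state of `A` every input has at
least one transition leading back into `A`. -/
def InputClosed (M : FSM S I O) (A : Set S) : Prop :=
  ∀ q ∈ A, ∀ i, ∃ o q', M.h q i o q' ∧ q' ∈ A

/-- The intersection `S/s₁ ∩ S/s₂` contains a complete submachine: a set of (distinct-component)
pairs containing the initial state `(s₁, s₂)` and input-closed in the intersection FSM. -/
def HasCompleteSubmachine (M : FSM S I O) (s₁ s₂ : S) : Prop :=
  ∃ A : Set (S × S), (s₁, s₂) ∈ A ∧ (∀ p ∈ A, p.1 ≠ p.2) ∧ InputClosed M.inter A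

/-- One round of the iterative deletion process: keep the states of `A` at which every input
has a transition into `A`. -/
def step (M : FSM S I O) (A : Set S) : Set S :=
  {q ∈ A | ∀ i, ∃ o q', M.h q i o q' ∧ q' ∈ A}

/-- Survivors of the deletion process after `n` rounds, starting from all states. -/
def surv (M : FSM S I O) : ℕ → Set S
  | 0 => Set.univ
  | n + 1 => step M (surv M n)

/-- Survivors of the deletion process on the intersection FSM after `n` rounds, starting
from all states of the intersection (pairs of distinct states). -/
def interSurv (M : FSM S I O) : ℕ → Set (S × S)
  | 0 => {p | p.1 ≠ p.2}
  | n + 1 => step M.inter (interSurv M n)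

/-- The greatest input-closed subset of states of the intersection FSM: the union of all
input-closed sets of distinct-component pairs. -/
def greatestInterClosed (M : FSM S I O) : Set (S × S) :=
  ⋃₀ {A : Set (S × S) | (∀ p ∈ A, p.1 ≠ p.2) ∧ InputClosed M.inter A}

end FSM

/-!
If `A` is a complete submachine, a homing test case can always be driven along a trace keeping
the two current states of `M` a pair of `A`: such a pair is never merged, so the test case never
stops, which a finite acyclic machine cannot do.

Conversely, if there is no complete submachine, the deletion process `interSurv` stabilises on an
input-closed set that cannot contain `(s₁, s₂)`, so `(s₁, s₂)` is deleted in some round. A pair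
deleted in round `n + 1` has an input all of whose distinct successor pairs were deleted by round
`n`; applying that input again and again, the round strictly decreases until the current states
of `M` merge, which gives a finite acyclic homing strategy.
-/

namespace FSM

variable {S I O Q : Type} {M : FSM S I O}

def Acyclic (M : FSM S I O) : Prop := ∀ q γ, γ ≠ [] → ¬ M.Runs q γ q

theorem Runs.append {q m t : S} {γ₁ γ₂ : List (I × O)} (h₁ : M.Runs q γ₁ m)
    (h₂ : M.Runs m γ₂ t) : M.Runs q (γ₁ ++ γ₂) t := by
  induction h₁ with
  | nil => exact h₂
  | cons hstep _ ih => exact .cons hstep (ih h₂)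

theorem Runs.snoc {q m t : S} {γ : List (I × O)} {i : I} {o : O} (h : M.Runs q γ m)
    (hstep : M.h m i o t) : M.Runs q (γ ++ [(i, o)]) t :=
  h.append (.cons hstep (.nil t))

theorem exists_runs_of_transGen {q t : S}
    (h : Relation.TransGen (fun a b => ∃ i o, M.h a i o b) q t) : ∃ γ ≠ [], M.Runs q γ t := by
  induction h with
  | single hstep =>
    obtain ⟨i, o, hstep⟩ := hstep
    exact ⟨[(i, o)], List.cons_ne_nil _ _, .cons hstep (.nil _)⟩
  | tail _ hstep ih =>
    obtain ⟨γ, -, hγ⟩ := ih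
    obtain ⟨i, o, hstep⟩ := hstep
    exact ⟨γ ++ [(i, o)], by simp, hγ.snoc hstep⟩

theorem acyclic_of_rank (rank : S → ℕ) (hrank : ∀ q i o q', M.h q i o q' → rank q' < rank q) :
    M.Acyclic := by
  have hle : ∀ {q γ t}, M.Runs q γ t → rank t ≤ rank q := by
    intro q γ t h
    induction h with
    | nil => exact le_rfl
    | cons hstep _ ih => exact ih.trans (hrank _ _ _ _ hstep).le
  rintro q (_ | ⟨a, γ⟩) hγ hrun
  · exact hγ rfl
  · cases hrun with
    | cons hstep hrun => exact (hle hrun).not_gt (hrank _ _ _ _ hstep)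

theorem Acyclic.eq_empty_of_forall_exists_step [Finite S] (hac : M.Acyclic) {B : Set S}
    (hB : ∀ q ∈ B, ∃ i o q', M.h q i o q' ∧ q' ∈ B) : B = ∅ := by
  let reachedFrom := Function.swap (Relation.TransGen fun a b => ∃ i o, M.h a i o b)
  have : IsTrans S reachedFrom := ⟨fun _ _ _ hab hbc => hbc.trans hab⟩
  have : Std.Irrefl reachedFrom := ⟨fun q hq => by
    obtain ⟨γ, hγ, hrun⟩ := exists_runs_of_transGen hq
    exact hac q γ hγ hrun⟩
  by_contra hne
  obtain ⟨q, hq, hmin⟩ := (Finite.wellFounded_of_trans_of_irrefl reachedFrom).has_min B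
    (Set.nonempty_iff_ne_empty.2 hne)
  obtain ⟨i, o, q', hstep, hq'⟩ := hB q hq
  exact hmin q' hq' (.single ⟨i, o, hstep⟩)

def post (M : FSM S I O) (X : Set S) (γ : List (I × O)) : Set S := {t | ∃ s ∈ X, M.Runs s γ t}

theorem post_nil (X : Set S) : M.post X [] = X := by
  ext t
  constructor
  · rintro ⟨s, hs, hrun⟩
    cases hrun
    exact hs
  · exact fun ht => ⟨t, ht, .nil t⟩

theorem mem_post_singleton {X : Set S} {i : I} {o : O} {t : S} :
    t ∈ M.post X [(i, o)] ↔ ∃ s ∈ X, M.h s i o t := by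
  constructor
  · rintro ⟨s, hs, hrun⟩
    cases hrun with
    | cons hstep hnil => cases hnil; exact ⟨s, hs, hstep⟩
  · rintro ⟨s, hs, hstep⟩
    exact ⟨s, hs, .cons hstep (.nil t)⟩

theorem post_cons (X : Set S) (i : I) (o : O) (γ : List (I × O)) :
    M.post X ((i, o) :: γ) = M.post (M.post X [(i, o)]) γ := by
  ext t
  constructor
  · rintro ⟨s, hs, hrun⟩
    cases hrun with
    | cons hstep hrun => exact ⟨_, mem_post_singleton.2 ⟨s, hs, hstep⟩, hrun⟩
  · rintro ⟨m, hm, hrun⟩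
    obtain ⟨s, hs, hstep⟩ := mem_post_singleton.1 hm
    exact ⟨s, hs, .cons hstep hrun⟩

theorem post_mono {X Y : Set S} (h : X ⊆ Y) (γ : List (I × O)) : M.post X γ ⊆ M.post Y γ :=
  fun _ ⟨s, hs, hrun⟩ => ⟨s, h hs, hrun⟩

theorem exists_forall_runs_eq_of_subsingleton [Nonempty S] {X : Set S} {γ : List (I × O)}
    (h : (M.post X γ).Subsingleton) : ∃ s, ∀ s' ∈ X, ∀ t, M.Runs s' γ t → t = s := by
  by_cases hne : (M.post X γ).Nonempty
  · obtain ⟨s, hs⟩ := hne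
    exact ⟨s, fun s' hs' t ht => h ⟨s', hs', ht⟩ hs⟩
  · exact ⟨Classical.arbitrary S, fun s' hs' t ht => absurd ⟨t, s', hs', ht⟩ hne⟩

def reachable (M : FSM S I O) (q₀ : S) : Set S := {q | ∃ γ, M.Runs q₀ γ q}

def restrict (M : FSM S I O) (R : Set S) : FSM R I O := ⟨fun a i o b => M.h a i o b⟩

theorem mem_reachable_of_step {q₀ q q' : S} {i : I} {o : O} (hq : q ∈ M.reachable q₀)
    (hstep : M.h q i o q') : q' ∈ M.reachable q₀ :=
  let ⟨γ, hγ⟩ := hq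
  ⟨γ ++ [(i, o)], hγ.snoc hstep⟩

theorem Runs.of_restrict {R : Set S} {a b : R} {γ : List (I × O)}
    (h : (M.restrict R).Runs a γ b) : M.Runs a γ b := by
  induction h with
  | nil => exact .nil _
  | cons hstep _ ih => exact .cons hstep ih

theorem Runs.restrict {R : Set S} (hR : ∀ q ∈ R, ∀ i o q', M.h q i o q' → q' ∈ R)
    {q t : S} {γ : List (I × O)} (h : M.Runs q γ t) (hq : q ∈ R) :
    ∃ ht : t ∈ R, (M.restrict R).Runs ⟨q, hq⟩ γ ⟨t, ht⟩ := by
  induction h with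
  | nil => exact ⟨hq, .nil _⟩
  | cons hstep _ ih =>
    have hs' := hR _ hq _ _ _ hstep
    obtain ⟨ht, hrun⟩ := ih hs'
    exact ⟨ht, .cons (show (M.restrict R).h ⟨_, hq⟩ _ _ ⟨_, hs'⟩ from hstep) hrun⟩

def ofStrategy (inp : Q → Option I) (next : Q → I → O → Q) : FSM Q I O :=
  ⟨fun q i o q' => inp q = some i ∧ next q i o = q'⟩

theorem adaptivelyHomingSet_of_strategy [Finite Q] {S' : Set S}
    {inp : Q → Option I} {next : Q → I → O → Q} (rank : Q → ℕ)
    (hrank : ∀ q i o, inp q = some i → rank (next q i o) < rank q) {q₀ : Q}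
    (hhom : IsHomingFor M S' (ofStrategy inp next) q₀) : M.AdaptivelyHomingSet S' := by
  set P := ofStrategy inp next
  set R := P.reachable q₀
  have hR : ∀ q ∈ R, ∀ i o q', P.h q i o q' → q' ∈ R := fun _ hq _ _ _ => mem_reachable_of_step hq
  have hq₀ : q₀ ∈ R := ⟨[], .nil q₀⟩
  refine ⟨R, Fintype.ofFinite R, P.restrict R, ⟨q₀, hq₀⟩, ⟨?_, ?_, ?_, ?_, ?_⟩, ?_⟩
  · rintro q i₁ o₁ q₁ i₂ o₂ q₂ ⟨h₁, -⟩ ⟨h₂, -⟩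
    exact Option.some_injective _ (h₁.symm.trans h₂)
  · rintro q i o q' ⟨hi, -⟩ o'
    exact ⟨⟨next q i o', hR q q.2 i o' _ ⟨hi, rfl⟩⟩, hi, rfl⟩
  · rintro q i o t₁ t₂ ⟨-, h₁⟩ ⟨-, h₂⟩
    exact Subtype.ext (h₁.symm.trans h₂)
  · exact acyclic_of_rank (rank ∘ Subtype.val) fun q i o q' ⟨hi, hq'⟩ =>
      show rank q' < rank q from hq' ▸ hrank q i o hi
  · rintro ⟨q, γ, hγ⟩
    obtain ⟨_, hrun⟩ := hγ.restrict hR hq₀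
    exact ⟨γ, hrun⟩
  · intro γ q hrun hdead
    exact hhom γ q hrun.of_restrict fun i o q' hstep => hdead i o ⟨q', hR q q.2 i o q' hstep⟩ hstep

theorem not_adaptivelyHomingPair_of_hasCompleteSubmachine {s₁ s₂ : S}
    (h : M.HasCompleteSubmachine s₁ s₂) : ¬ M.AdaptivelyHomingPair s₁ s₂ := by
  rintro ⟨Q, _, P, q₀, hP, hhom⟩
  obtain ⟨A, hA₀, hAne, hA⟩ := h
  let B : Set Q := {q | ∃ γ t₁ t₂, P.Runs q₀ γ q ∧ M.Runs s₁ γ t₁ ∧ M.Runs s₂ γ t₂ ∧ (t₁, t₂) ∈ A}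
  have hB : ∀ q ∈ B, ∃ i o q', P.h q i o q' ∧ q' ∈ B := by
    rintro q ⟨γ, t₁, t₂, hq, ht₁, ht₂, ht⟩
    have hlive : ¬ P.Deadlock q := fun hdead => by
      obtain ⟨s, hs⟩ := hhom γ q hq hdead
      exact hAne _ ht ((hs s₁ (Set.mem_insert _ _) t₁ ht₁).trans
        (hs s₂ (Set.mem_insert_of_mem _ rfl) t₂ ht₂).symm)
    simp only [Deadlock, not_forall, not_not] at hlive
    obtain ⟨i, o, q', hstep⟩ := hlive
    obtain ⟨o', ⟨u₁, u₂⟩, ⟨hu₁, hu₂, -⟩, hu⟩ := hA _ ht i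
    obtain ⟨q'', hq''⟩ := hP.outputComplete q i o q' hstep o'
    exact ⟨i, o', q'', hq'', γ ++ [(i, o')], u₁, u₂, hq.snoc hq'', ht₁.snoc hu₁, ht₂.snoc hu₂, hu⟩
  exact Set.eq_empty_iff_forall_notMem.1 (Acyclic.eq_empty_of_forall_exists_step hP.acyclic hB) q₀
    ⟨[], s₁, s₂, .nil _, .nil _, .nil _, hA₀⟩

theorem interSurv_antitone (M : FSM S I O) : Antitone M.interSurv :=
  antitone_nat_of_succ_le fun _ _ hp => hp.1

theorem hasCompleteSubmachine_of_forall_mem_interSurv [Finite S] {s₁ s₂ : S}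
    (h : ∀ n, (s₁, s₂) ∈ M.interSurv n) : M.HasCompleteSubmachine s₁ s₂ := by
  obtain ⟨N, hN⟩ := WellFoundedLT.antitone_chain_condition M.interSurv_antitone
  refine ⟨M.interSurv N, h N, fun p hp => M.interSurv_antitone (Nat.zero_le N) hp, fun p hp => ?_⟩
  exact (hN (N + 1) N.le_succ ▸ hp : p ∈ M.interSurv (N + 1)).2

/-- The round of the deletion process in which `p` is deleted (`0` if it never is). -/
noncomputable def deletionRound (M : FSM S I O) (p : S × S) : ℕ := sInf {n | p ∉ M.interSurv n}

theorem notMem_interSurv_deletionRound {p : S × S} (h : ∃ n, p ∉ M.interSurv n) :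
    p ∉ M.interSurv (M.deletionRound p) :=
  Nat.sInf_mem h

theorem deletionRound_le {p : S × S} {n : ℕ} (h : p ∉ M.interSurv n) : M.deletionRound p ≤ n :=
  Nat.sInf_le h

theorem exists_input_of_deletionRound_pos {p : S × S} (h : 0 < M.deletionRound p) :
    ∃ i, ∀ o r, M.inter.h p i o r → r ∉ M.interSurv (M.deletionRound p - 1) := by
  have hmem : p ∈ M.interSurv (M.deletionRound p - 1) :=
    not_not.1 (Nat.notMem_of_lt_sInf (Nat.sub_lt h one_pos))
  have hdel : p ∉ M.interSurv (M.deletionRound p - 1 + 1) := by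
    rw [Nat.sub_add_cancel h]
    exact Nat.sInf_mem (Nat.nonempty_of_pos_sInf h)
  simpa [interSurv, step, hmem] using hdel

noncomputable def homingInput (M : FSM S I O) (p : S × S) : Option I :=
  if h : 0 < M.deletionRound p then some (M.exists_input_of_deletionRound_pos h).choose else none

theorem homingInput_eq_some {p : S × S} {i : I} (h : M.homingInput p = some i) :
    0 < M.deletionRound p ∧ ∀ o r, M.inter.h p i o r → r ∉ M.interSurv (M.deletionRound p - 1) := by
  unfold homingInput at h
  split_ifs at h with hpos
  exact ⟨hpos, Option.some_injective _ h ▸ (M.exists_input_of_deletionRound_pos hpos).choose_spec⟩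

theorem deletionRound_eq_zero_of_homingInput_eq_none {p : S × S} (h : M.homingInput p = none) :
    M.deletionRound p = 0 := by
  unfold homingInput at h
  split_ifs at h with hpos
  exact Nat.eq_zero_of_not_pos hpos

open Classical in
noncomputable def homingNext (M : FSM S I O) (p : S × S) (i : I) (o : O) : Option (S × S) :=
  if h : ∃ r, M.inter.h p i o r then some h.choose else none

theorem inter_of_homingNext_eq_some {p r : S × S} {i : I} {o : O}
    (h : M.homingNext p i o = some r) : M.inter.h p i o r := by
  unfold homingNext at h
  split_ifs at h with hex
  exact Option.some_injective _ h ▸ hex.choose_spec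

theorem not_inter_of_homingNext_eq_none {p : S × S} {i : I} {o : O}
    (h : M.homingNext p i o = none) (r : S × S) : ¬ M.inter.h p i o r := by
  unfold homingNext at h
  split_ifs at h with hex
  exact fun hr => hex ⟨r, hr⟩

theorem homingNext_deletionRound_lt {p : S × S} {i : I} (o : O) (hi : M.homingInput p = some i) :
    (M.homingNext p i o).elim 0 (fun r => M.deletionRound r + 1) < M.deletionRound p + 1 := by
  obtain ⟨hpos, hdel⟩ := homingInput_eq_some hi
  cases hnext : M.homingNext p i o with
  | none => exact Nat.succ_pos _
  | some r =>
    have := deletionRound_le (hdel o r (inter_of_homingNext_eq_some hnext))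
    simp only [Option.elim]
    omega

/-- The state `none` stands for "the current states of `M` have merged (or died out)". -/
noncomputable def homingStrategy (M : FSM S I O) : FSM (Option (S × S)) I O :=
  ofStrategy (fun q => q.bind M.homingInput) (fun q i o => q.bind fun p => M.homingNext p i o)

/-- Invariant relating the set `X` of current states of `M` to the state `q` of the homing
strategy. -/
def Tracks (M : FSM S I O) : Set S → Option (S × S) → Prop
  | X, some p => X ⊆ {p.1, p.2} ∧ ∃ n, p ∉ M.interSurv n
  | X, none => X.Subsingleton

theorem post_pair_subset (ho : M.Observable) {p r : S × S} {i : I} {o : O}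
    (h : M.inter.h p i o r) : M.post {p.1, p.2} [(i, o)] ⊆ {r.1, r.2} := by
  intro u hu
  obtain ⟨s, rfl | rfl, hsu⟩ := mem_post_singleton.1 hu
  · exact Or.inl (ho _ _ _ _ _ hsu h.1)
  · exact Or.inr (ho _ _ _ _ _ hsu h.2.1)

theorem post_pair_subsingleton (ho : M.Observable) {p : S × S} {i : I} {o : O}
    (h : ∀ r, ¬ M.inter.h p i o r) : (M.post {p.1, p.2} [(i, o)]).Subsingleton := by
  intro u hu u' hu'
  obtain ⟨s, hs, hsu⟩ := mem_post_singleton.1 hu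
  obtain ⟨s', hs', hsu'⟩ := mem_post_singleton.1 hu'
  by_contra hne
  rcases hs with rfl | rfl <;> rcases hs' with rfl | rfl
  · exact hne (ho _ _ _ _ _ hsu hsu')
  · exact h (u, u') ⟨hsu, hsu', hne⟩
  · exact h (u', u) ⟨hsu', hsu, Ne.symm hne⟩
  · exact hne (ho _ _ _ _ _ hsu hsu')

theorem Tracks.step (ho : M.Observable) {X : Set S} {q q' : Option (S × S)} {i : I} {o : O}
    (hX : M.Tracks X q) (h : M.homingStrategy.h q i o q') : M.Tracks (M.post X [(i, o)]) q' := by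
  cases q with
  | none => exact absurd h.1.symm (Option.some_ne_none i)
  | some p =>
    obtain ⟨hXp, -⟩ := hX
    obtain ⟨hi, rfl⟩ := h
    obtain ⟨-, hdel⟩ := homingInput_eq_some hi
    change M.Tracks _ (M.homingNext p i o)
    cases hnext : M.homingNext p i o with
    | none =>
      exact (post_pair_subsingleton ho (not_inter_of_homingNext_eq_none hnext)).anti
        (post_mono hXp _)
    | some r =>
      have hr := inter_of_homingNext_eq_some hnext
      exact ⟨(post_mono hXp _).trans (post_pair_subset ho hr), _, hdel o r hr⟩

theorem Tracks.runs (ho : M.Observable) {X : Set S} {q q' : Option (S × S)} {γ : List (I × O)}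
    (hX : M.Tracks X q) (h : M.homingStrategy.Runs q γ q') : M.Tracks (M.post X γ) q' := by
  induction h generalizing X with
  | nil => rwa [post_nil]
  | cons hstep _ ih =>
    rw [post_cons]
    exact ih (hX.step ho hstep)

theorem Tracks.subsingleton_of_deadlock (hc : M.Complete) {X : Set S} {q : Option (S × S)}
    (hX : M.Tracks X q) (hq : M.homingStrategy.Deadlock q) : X.Subsingleton := by
  cases q with
  | none => exact hX
  | some p =>
    obtain ⟨hXp, hdel⟩ := hX
    cases hi : M.homingInput p with
    | some i =>
      obtain ⟨o, -⟩ := hc p.1 i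
      exact absurd ⟨hi, rfl⟩ (hq i o _)
    | none =>
      have h0 : p ∉ M.interSurv 0 :=
        deletionRound_eq_zero_of_homingInput_eq_none hi ▸ notMem_interSurv_deletionRound hdel
      have hp : p.1 = p.2 := not_not.1 h0
      exact Set.subsingleton_singleton.anti (by simpa [hp] using hXp)

theorem adaptivelyHomingPair_of_notMem_interSurv [Finite S] (hc : M.Complete)
    (ho : M.Observable) {s₁ s₂ : S} {n : ℕ} (h : (s₁, s₂) ∉ M.interSurv n) :
    M.AdaptivelyHomingPair s₁ s₂ := by
  have : Nonempty S := ⟨s₁⟩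
  have hinit : M.Tracks {s₁, s₂} (some (s₁, s₂)) := ⟨subset_rfl, n, h⟩
  have hhom : IsHomingFor M {s₁, s₂} M.homingStrategy (some (s₁, s₂)) := fun γ q hrun hdead =>
    exists_forall_runs_eq_of_subsingleton ((hinit.runs ho hrun).subsingleton_of_deadlock hc hdead)
  refine adaptivelyHomingSet_of_strategy (fun q => q.elim 0 fun p => M.deletionRound p + 1) ?_ hhom
  rintro (_ | p) i o hi
  · cases hi
  · exact homingNext_deletionRound_lt o hi

end FSM

theorem pair_adaptively_homing_iff_no_completeSubmachine_general
    {S I O : Type} [Fintype S]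
    (M : FSM S I O) (hc : M.Complete) (ho : M.Observable) (s₁ s₂ : S) :
    M.AdaptivelyHomingPair s₁ s₂ ↔ ¬ M.HasCompleteSubmachine s₁ s₂ := by
  refine ⟨fun hhom hsub => FSM.not_adaptivelyHomingPair_of_hasCompleteSubmachine hsub hhom,
    fun hno => ?_⟩
  obtain ⟨n, hn⟩ : ∃ n, (s₁, s₂) ∉ M.interSurv n := by
    by_contra! hall
    exact hno (FSM.hasCompleteSubmachine_of_forall_mem_interSurv hall)
  exact FSM.adaptivelyHomingPair_of_notMem_interSurv hc ho hn

/-- the pair `(s₁, s₂)` is adaptively homing iff the intersection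
`S/s₁ ∩ S/s₂` has no complete submachine. -/
theorem pair_adaptively_homing_iff_no_completeSubmachine
    {S I O : Type} [Fintype S] [Fintype I] [Fintype O]
    (M : FSM S I O) (hc : M.Complete) (ho : M.Observable) (s₁ s₂ : S) (hne : s₁ ≠ s₂) :
    M.AdaptivelyHomingPair s₁ s₂ ↔ ¬ M.HasCompleteSubmachine s₁ s₂ :=
  pair_adaptively_homing_iff_no_completeSubmachine_general M hc ho s₁ s₂
end

section
/- If a pair (s1,s2) of states of a complete observable FSM S with n states is adaptively homing, then it admits a homing test case of length (height, the length of the longest trace from the initial state to a deadlock state) at most n(n−1)/2. -/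
/-!
A pair of distinct states is deleted from `interSurv M` by round `k` exactly when some adaptive
experiment of height at most `k` merges it. A homing test case with `m` states has height below
`m`, so it witnesses that `(s₁, s₂)` is deleted by round `m`. The surviving sets are symmetric,
so every round that deletes anything deletes at least two of the `n(n-1)` ordered pairs of
distinct states, and the deletion process is stationary from round `n(n-1)/2` on. Conversely,
choosing at each deleted pair an input that sends it to pairs deleted one round earlier, and
following this input along the pair of current states tracked in `M.inter`, yields a homing test
case whose height is at most the deletion round of `(s₁, s₂)`.
-/

theorem antitone_subset_of_ncard_add_le {α : Type*} [Finite α] {f : ℕ → Set α}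
    (hf : Antitone f) (F : Set α → Set α) (hF : ∀ k, f (k + 1) = F (f k)) {d : ℕ} (hd : 0 < d)
    (hdrop : ∀ k, f (k + 1) ≠ f k → (f (k + 1)).ncard + d ≤ (f k).ncard) (m : ℕ) :
    f ((f 0).ncard / d) ⊆ f m := by
  set N := (f 0).ncard / d
  have hconst : ∀ k, f (k + 1) = f k → ∀ j, f (k + j) = f k := by
    intro k hk j
    induction j with
    | zero => rfl
    | succ j ih => rw [← add_assoc, hF, ih, ← hF, hk]
  have hstuck : f (N + 1) = f N := by
    by_contra hne
    have hmoving : ∀ k ≤ N, f (k + 1) ≠ f k := by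
      intro k hk heq
      have h₁ := hconst k heq (N + 1 - k)
      have h₂ := hconst k heq (N - k)
      rw [Nat.add_sub_cancel' (by omega)] at h₁ h₂
      exact hne (h₁.trans h₂.symm)
    have hcount : ∀ k ≤ N + 1, (f k).ncard + d * k ≤ (f 0).ncard := by
      intro k
      induction k with
      | zero => simp
      | succ k ih =>
        intro hk
        have h₁ := hdrop k (hmoving k (by omega))
        have h₂ := ih (by omega)
        rw [Nat.mul_succ]
        omega
    have h₁ := hcount (N + 1) le_rfl
    have h₂ : (f 0).ncard < d * (N + 1) := Nat.lt_mul_div_succ _ hd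
    omega
  rcases le_total m N with hm | hm
  · exact hf hm
  · rw [← Nat.add_sub_cancel' hm, hconst N hstuck]

namespace FSM

variable {S I O : Type}

section Runs

variable {M : FSM S I O}

theorem runs_append_iff {s t : S} {γ δ : List (I × O)} :
    M.Runs s (γ ++ δ) t ↔ ∃ m, M.Runs s γ m ∧ M.Runs m δ t := by
  induction γ generalizing s with
  | nil => exact ⟨fun h => ⟨s, .nil s, h⟩, fun ⟨m, hm, h⟩ => by cases hm; exact h⟩
  | cons x γ ih =>
    constructor
    · rintro (_ | ⟨hs, hr⟩)
      obtain ⟨m, hm, hmt⟩ := ih.1 hr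
      exact ⟨m, .cons hs hm, hmt⟩
    · rintro ⟨m, _ | ⟨hs, hm⟩, hmt⟩
      exact .cons hs (ih.2 ⟨m, hm, hmt⟩)

theorem runs_concat_iff {s t : S} {γ : List (I × O)} {i : I} {o : O} :
    M.Runs s (γ ++ [(i, o)]) t ↔ ∃ m, M.Runs s γ m ∧ M.h m i o t := by
  rw [runs_append_iff]
  refine exists_congr fun m => and_congr_right fun _ => ⟨?_, fun h => .cons h (.nil t)⟩
  rintro (_ | ⟨h, _ | _⟩)
  exact h

theorem Observable.runs_unique (ho : M.Observable) {s t₁ t₂ : S} {γ : List (I × O)}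
    (h₁ : M.Runs s γ t₁) (h₂ : M.Runs s γ t₂) : t₁ = t₂ := by
  induction h₁ with
  | nil => cases h₂; rfl
  | cons hs _ ih =>
    cases h₂ with
    | cons hs' hr' => exact ih (ho _ _ _ _ _ hs' hs ▸ hr')

theorem Observable.inter (ho : M.Observable) : M.inter.Observable :=
  fun _ _ _ _ _ h₁ h₂ => Prod.ext (ho _ _ _ _ _ h₁.1 h₂.1) (ho _ _ _ _ _ h₁.2.1 h₂.2.1)

/-- Once two runs of an observable machine meet they stay together. -/
theorem Observable.inter_runs (ho : M.Observable) {a b t₁ t₂ : S} {γ : List (I × O)}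
    (h₁ : M.Runs a γ t₁) (h₂ : M.Runs b γ t₂) (ht : t₁ ≠ t₂) :
    M.inter.Runs (a, b) γ (t₁, t₂) := by
  induction h₁ generalizing b with
  | nil => cases h₂; exact .nil _
  | @cons a i o a' γ t₁ ha hr ih =>
    cases h₂ with
    | @cons _ _ _ b' _ _ hb hr' =>
      have hne : a' ≠ b' := fun h => ht (ho.runs_unique hr (h ▸ hr'))
      exact .cons ⟨ha, hb, hne⟩ (ih hr' ht)

theorem Runs.length_lt_ncard [Finite S] (hac : ∀ q γ, γ ≠ ([] : List (I × O)) → ¬ M.Runs q γ q)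
    {s t : S} {γ : List (I × O)} (h : M.Runs s γ t) :
    γ.length < {m | ∃ δ, M.Runs s δ m}.ncard := by
  induction h with
  | nil s => exact (Set.ncard_pos (Set.toFinite _)).2 ⟨s, [], .nil s⟩
  | @cons s i o s' γ t hs _ ih =>
    refine (Nat.succ_le_of_lt ih).trans_lt
      (Set.ncard_lt_ncard ⟨?_, fun hsub => ?_⟩ (Set.toFinite _))
    · rintro m ⟨δ, hδ⟩
      exact ⟨_, .cons hs hδ⟩
    · obtain ⟨δ, hδ⟩ := hsub ⟨[], .nil s⟩
      exact hac s ((i, o) :: δ) (List.cons_ne_nil _ _) (.cons hs hδ)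

end Runs

section DeletionProcess

variable (M : FSM S I O)

theorem interSurv_succ_subset (k : ℕ) : M.interSurv (k + 1) ⊆ M.interSurv k :=
  Set.sep_subset _ _

theorem interSurv_antitone_s13 : Antitone M.interSurv :=
  antitone_nat_of_succ_le M.interSurv_succ_subset

theorem interSurv_subset (k : ℕ) : M.interSurv k ⊆ {p | p.1 ≠ p.2} :=
  M.interSurv_antitone_s13 (Nat.zero_le k)

theorem swap_mem_interSurv {k : ℕ} {p : S × S} (hp : p ∈ M.interSurv k) :
    p.swap ∈ M.interSurv k := by
  induction k generalizing p with
  | zero => exact Ne.symm hp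
  | succ k ih =>
    refine ⟨ih hp.1, fun i => ?_⟩
    obtain ⟨o, p', ⟨h₁, h₂, hne⟩, hp'⟩ := hp.2 i
    exact ⟨o, p'.swap, ⟨h₂, h₁, hne.symm⟩, ih hp'⟩

/-- Deletions come in symmetric pairs `p`, `p.swap`, and `p ≠ p.swap` off the diagonal. -/
theorem ncard_interSurv_succ_add_two_le [Finite S] {k : ℕ}
    (h : M.interSurv (k + 1) ≠ M.interSurv k) :
    (M.interSurv (k + 1)).ncard + 2 ≤ (M.interSurv k).ncard := by
  obtain ⟨p, hpk, hpk₁⟩ :=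
    Set.exists_of_ssubset ((M.interSurv_succ_subset k).ssubset_of_ne h)
  have hswap : p ≠ p.swap := fun h => M.interSurv_subset k hpk (congrArg Prod.fst h)
  have hpair : {p, p.swap} ⊆ M.interSurv k \ M.interSurv (k + 1) := by
    rintro q (rfl | rfl)
    · exact ⟨hpk, hpk₁⟩
    · exact ⟨M.swap_mem_interSurv hpk, fun hq => hpk₁ (M.swap_mem_interSurv hq)⟩
  have h₁ := Set.ncard_le_ncard hpair (Set.toFinite _)
  have h₂ := Set.ncard_sdiff_add_ncard_of_subset (M.interSurv_succ_subset k) (Set.toFinite _)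
  rw [Set.ncard_pair hswap] at h₁
  omega

theorem ncard_interSurv_zero [Fintype S] :
    (M.interSurv 0).ncard = Fintype.card S * (Fintype.card S - 1) := by
  have h : M.interSurv 0 = ↑(Finset.univ : Finset S).offDiag := by
    ext p
    simp [interSurv]
  rw [h, Set.ncard_coe_finset, Finset.offDiag_card, Finset.card_univ, Nat.mul_sub_one]

theorem interSurv_half_subset [Fintype S] (m : ℕ) :
    M.interSurv (Fintype.card S * (Fintype.card S - 1) / 2) ⊆ M.interSurv m := by
  rw [← M.ncard_interSurv_zero]
  exact antitone_subset_of_ncard_add_le M.interSurv_antitone_s13 (step M.inter) (fun _ => rfl)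
    two_pos (fun _ => M.ncard_interSurv_succ_add_two_le) m

/-- Had the pair survived, the input applied at `q` could keep it apart along some output, and
output completeness makes the test case follow that output. -/
theorem not_mem_interSurv_of_isHomingFor {Q : Type} {P : FSM Q I O}
    (hP : ∀ q i o q', P.h q i o q' → ∀ o', ∃ q'', P.h q i o' q'') {k : ℕ} {q : Q} {a b : S}
    (hlen : ∀ γ r, P.Runs q γ r → γ.length < k) (hhom : IsHomingFor M {a, b} P q) :
    (a, b) ∉ M.interSurv k := by
  induction k generalizing q a b with
  | zero => exact absurd (hlen [] q (.nil q)) (Nat.not_lt_zero _)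
  | succ k ih =>
    rintro ⟨hab, hclosed⟩
    by_cases hd : P.Deadlock q
    · obtain ⟨s, hs⟩ := hhom [] q (.nil q) hd
      exact M.interSurv_subset k hab
        ((hs a (by simp) a (.nil a)).trans (hs b (by simp) b (.nil b)).symm)
    obtain ⟨i, o, q₁, hq₁⟩ : ∃ i o q₁, P.h q i o q₁ := by simpa [Deadlock] using hd
    obtain ⟨o', ⟨a', b'⟩, ⟨ha, hb, -⟩, hmem⟩ := hclosed i
    obtain ⟨q', hq'⟩ := hP q i o q₁ hq₁ o'
    refine ih (q := q') (fun γ r hr => Nat.lt_of_succ_lt_succ (hlen _ r (.cons hq' hr)))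
      (fun γ r hr hd => ?_) hmem
    obtain ⟨s, hs⟩ := hhom _ r (.cons hq' hr) hd
    refine ⟨s, ?_⟩
    rintro s' (rfl | rfl) t ht
    · exact hs a (by simp) t (.cons ha ht)
    · exact hs b (by simp) t (.cons hb ht)

end DeletionProcess

section PrefixTree

/-- The sets of traces of test cases. -/
structure IsTestLanguage (L : Set (List (I × O))) : Prop where
  nil_mem : [] ∈ L
  mem_of_append_mem : ∀ γ δ, γ ++ δ ∈ L → γ ∈ L
  singleInput : ∀ γ i₁ o₁ i₂ o₂, γ ++ [(i₁, o₁)] ∈ L → γ ++ [(i₂, o₂)] ∈ L → i₁ = i₂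
  outputComplete : ∀ γ i o, γ ++ [(i, o)] ∈ L → ∀ o', γ ++ [(i, o')] ∈ L

def prefixTree (L : Set (List (I × O))) : FSM L I O :=
  ⟨fun γ i o γ' => γ'.1 = γ.1 ++ [(i, o)]⟩

variable {L : Set (List (I × O))}

theorem prefixTree_runs_iff (hL : ∀ γ δ, γ ++ δ ∈ L → γ ∈ L) {γ γ' : L}
    {δ : List (I × O)} : (prefixTree L).Runs γ δ γ' ↔ γ'.1 = γ.1 ++ δ := by
  constructor
  · intro h
    induction h with
    | nil => simp
    | cons h _ ih => rw [ih, h, List.append_assoc, List.singleton_append]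
  · intro h
    induction δ generalizing γ with
    | nil =>
      obtain rfl : γ' = γ := Subtype.ext (by simpa using h)
      exact .nil _
    | cons x δ ih =>
      obtain ⟨i, o⟩ := x
      have hmem : γ.1 ++ [(i, o)] ∈ L := hL _ δ (by simpa [h] using γ'.2)
      have hstep : (prefixTree L).h γ i o ⟨_, hmem⟩ := rfl
      exact .cons hstep (ih (by simpa using h))

theorem IsTestLanguage.prefixTree_isTestCase (hL : IsTestLanguage L) :
    (prefixTree L).IsTestCase ⟨[], hL.nil_mem⟩ where
  singleInput _ _ _ q₁ _ _ q₂ h₁ h₂ := hL.singleInput _ _ _ _ _ (h₁ ▸ q₁.2) (h₂ ▸ q₂.2)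
  outputComplete _ _ _ q' h o' := ⟨⟨_, hL.outputComplete _ _ _ (h ▸ q'.2) o'⟩, rfl⟩
  observable _ _ _ _ _ h₁ h₂ := Subtype.ext (h₁.trans h₂.symm)
  acyclic q γ hγ h := hγ (by simpa using ((prefixTree_runs_iff hL.mem_of_append_mem).1 h).symm)
  connected q := ⟨q.1, (prefixTree_runs_iff hL.mem_of_append_mem).2 rfl⟩

theorem isTestLanguage_singleton_nil : IsTestLanguage ({[]} : Set (List (I × O))) :=
  ⟨rfl, fun _ _ h => (List.append_eq_nil_iff.1 h).1, by simp, by simp⟩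

theorem IsTestLanguage.exists_homing_testCase [Finite I] [Finite O] (hL : IsTestLanguage L)
    {M : FSM S I O} {S' : Set S}
    (hhom : ∀ γ ∈ L, (∀ x, γ ++ [x] ∉ L) → ∃ s, ∀ s' ∈ S', ∀ t, M.Runs s' γ t → t = s)
    {k : ℕ} (hk : ∀ γ ∈ L, γ.length ≤ k) :
    ∃ (Q : Type) (_ : Fintype Q) (P : FSM Q I O) (q0 : Q),
      P.IsTestCase q0 ∧ IsHomingFor M S' P q0 ∧ ∀ γ q, P.Runs q0 γ q → γ.length ≤ k := by
  have hfin : L.Finite := (List.finite_length_le (I × O) k).subset hk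
  have hruns {γ : List (I × O)} {q : L} (h : (prefixTree L).Runs ⟨[], hL.nil_mem⟩ γ q) :
      q.1 = γ :=
    (prefixTree_runs_iff hL.mem_of_append_mem).1 h
  refine ⟨L, hfin.fintype, prefixTree L, _, hL.prefixTree_isTestCase, fun γ q h hd => ?_,
    fun γ q h => hruns h ▸ hk q.1 q.2⟩
  refine hhom γ (hruns h ▸ q.2) fun ⟨i, o⟩ hmem => hd i o ⟨_, hmem⟩ ?_
  simp [prefixTree, hruns h]

end PrefixTree

section Strategy

variable (M : FSM S I O)

/-- Outputs on which the pair merges are not transitions of `M.inter` and impose nothing. -/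
def IsHomingStrategy (σ : S × S → I) : Prop :=
  ∀ k p, p.1 ≠ p.2 → p ∉ M.interSurv (k + 1) →
    ∀ o p', M.inter.h p (σ p) o p' → p' ∉ M.interSurv k

theorem exists_isHomingStrategy [Nonempty I] : ∃ σ, M.IsHomingStrategy σ := by
  classical
  have hinput : ∀ p : S × S, ∃ i, ∀ k, p.1 ≠ p.2 → p ∉ M.interSurv (k + 1) →
      ∀ o p', M.inter.h p i o p' → p' ∉ M.interSurv k := by
    intro p
    by_cases h : ∃ k, p.1 ≠ p.2 ∧ p ∉ M.interSurv (k + 1)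
    · -- the input that deletes `p` in its first deletion round works for every later round
      have hfirst : p ∈ M.interSurv (Nat.find h) := by
        rcases hk : Nat.find h with _ | k
        · exact (Nat.find_spec h).1
        · by_contra hp
          exact Nat.find_min h (by omega : k < Nat.find h) ⟨(Nat.find_spec h).1, hp⟩
      obtain ⟨i, hi⟩ : ∃ i, ∀ o p', M.inter.h p i o p' → p' ∉ M.interSurv (Nat.find h) := by
        by_contra! hall
        exact (Nat.find_spec h).2 ⟨hfirst, hall⟩
      exact ⟨i, fun k hne hk o p' hp' hmem =>
        hi o p' hp' (M.interSurv_antitone_s13 (Nat.find_min' h ⟨hne, hk⟩) hmem)⟩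
    · exact ⟨Classical.arbitrary I, fun k hne hk => absurd ⟨k, hne, hk⟩ h⟩
  choose σ hσ using hinput
  exact ⟨σ, fun k p => hσ p k⟩

/-- The traces of the experiment that applies `σ` to the pair of current states, tracked in
`M.inter` from `p₀`, for as long as they are distinct. -/
def strategyLanguage (σ : S × S → I) (p₀ : S × S) : Set (List (I × O)) :=
  {γ | ∀ δ i o, δ ++ [(i, o)] <+: γ → ∃ p, M.inter.Runs p₀ δ p ∧ p.1 ≠ p.2 ∧ σ p = i}

variable {M} {σ : S × S → I} {p₀ : S × S}

theorem concat_mem_strategyLanguage_iff {γ : List (I × O)} {i : I} {o : O} :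
    γ ++ [(i, o)] ∈ M.strategyLanguage σ p₀ ↔
      γ ∈ M.strategyLanguage σ p₀ ∧ ∃ p, M.inter.Runs p₀ γ p ∧ p.1 ≠ p.2 ∧ σ p = i := by
  constructor
  · intro h
    exact ⟨fun δ j o' hδ => h δ j o' (hδ.trans (List.prefix_append _ _)),
      h γ i o (List.prefix_refl _)⟩
  · rintro ⟨hγ, hlast⟩ δ j o' hδ
    rcases List.prefix_concat_iff.1 hδ with heq | hδ
    · obtain ⟨rfl, rfl, rfl⟩ : δ = γ ∧ j = i ∧ o' = o := by simpa using heq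
      exact hlast
    · exact hγ δ j o' hδ

theorem isTestLanguage_strategyLanguage (ho : M.Observable) :
    IsTestLanguage (M.strategyLanguage σ p₀) where
  nil_mem _ _ _ h := absurd (List.prefix_nil.1 h) (by simp)
  mem_of_append_mem γ δ h δ' i o hδ' := h δ' i o (hδ'.trans (List.prefix_append γ δ))
  singleInput γ i₁ o₁ i₂ o₂ h₁ h₂ := by
    obtain ⟨-, p, hp, -, rfl⟩ := concat_mem_strategyLanguage_iff.1 h₁
    obtain ⟨-, p', hp', -, rfl⟩ := concat_mem_strategyLanguage_iff.1 h₂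
    rw [ho.inter.runs_unique hp hp']
  outputComplete _ _ _ h _ :=
    concat_mem_strategyLanguage_iff.2 (concat_mem_strategyLanguage_iff.1 h)

/-- Each input of a homing strategy lowers the deletion round of the tracked pair. -/
theorem IsHomingStrategy.exists_not_mem_interSurv (hσ : M.IsHomingStrategy σ)
    (ho : M.Observable) {k : ℕ} (hp₀ : p₀ ∉ M.interSurv k) {γ : List (I × O)} {p : S × S}
    (hγ : γ ∈ M.strategyLanguage σ p₀) (hp : M.inter.Runs p₀ γ p) :
    ∃ j, γ.length + j = k ∧ p ∉ M.interSurv j := by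
  induction γ using List.reverseRecOn generalizing p with
  | nil =>
    cases hp
    exact ⟨k, by simp, hp₀⟩
  | append_singleton γ x ih =>
    obtain ⟨i, o⟩ := x
    obtain ⟨hγ', q, hq, hqne, rfl⟩ := concat_mem_strategyLanguage_iff.1 hγ
    obtain ⟨q', hq', hstep⟩ := runs_concat_iff.1 hp
    obtain rfl := ho.inter.runs_unique hq hq'
    obtain ⟨_ | j, hj, hqj⟩ := ih hγ' hq
    · exact absurd hqne (by simpa [interSurv] using hqj)
    · exact ⟨j, by simp; omega, hσ j q hqne hqj o p hstep⟩

theorem IsHomingStrategy.length_le (hσ : M.IsHomingStrategy σ) (ho : M.Observable) {k : ℕ}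
    (hp₀ : p₀ ∉ M.interSurv k) {γ : List (I × O)} (hγ : γ ∈ M.strategyLanguage σ p₀) :
    γ.length ≤ k := by
  rcases List.eq_nil_or_concat' γ with rfl | ⟨δ, ⟨i, o⟩, rfl⟩
  · simp
  obtain ⟨hδ, p, hp, hne, -⟩ := concat_mem_strategyLanguage_iff.1 hγ
  obtain ⟨_ | j, hj, hpj⟩ := hσ.exists_not_mem_interSurv ho hp₀ hδ hp
  · exact absurd hne (by simpa [interSurv] using hpj)
  · simp; omega

theorem Observable.exists_forall_runs_eq (ho : M.Observable) {a b : S} {γ : List (I × O)}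
    (h : ∀ t₁ t₂, M.Runs a γ t₁ → M.Runs b γ t₂ → t₁ = t₂) :
    ∃ s, ∀ s' ∈ ({a, b} : Set S), ∀ t, M.Runs s' γ t → t = s := by
  have hR : ∀ t t', (M.Runs a γ t ∨ M.Runs b γ t) → (M.Runs a γ t' ∨ M.Runs b γ t') →
      t = t' := by
    rintro t t' (h₁ | h₁) (h₂ | h₂)
    · exact ho.runs_unique h₁ h₂
    · exact h _ _ h₁ h₂
    · exact (h _ _ h₂ h₁).symm
    · exact ho.runs_unique h₁ h₂
  by_cases hex : ∃ t, M.Runs a γ t ∨ M.Runs b γ t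
  · obtain ⟨s, hs⟩ := hex
    exact ⟨s, by rintro s' (rfl | rfl) t ht; exacts [hR _ _ (.inl ht) hs, hR _ _ (.inr ht) hs]⟩
  · push Not at hex
    exact ⟨a, by rintro s' (rfl | rfl) t ht; exacts [((hex t).1 ht).elim, ((hex t).2 ht).elim]⟩

/-- A maximal trace of the experiment has no distinct tracked pair left to extend it from. -/
theorem strategyLanguage_homes [Nonempty O] (ho : M.Observable) {s₁ s₂ : S}
    {γ : List (I × O)} (hγ : γ ∈ M.strategyLanguage σ (s₁, s₂))
    (hmax : ∀ x, γ ++ [x] ∉ M.strategyLanguage σ (s₁, s₂)) :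
    ∃ s, ∀ s' ∈ ({s₁, s₂} : Set S), ∀ t, M.Runs s' γ t → t = s := by
  refine ho.exists_forall_runs_eq fun t₁ t₂ h₁ h₂ => by_contra fun ht => ?_
  exact hmax (σ (t₁, t₂), Classical.arbitrary O)
    (concat_mem_strategyLanguage_iff.2 ⟨hγ, _, ho.inter_runs h₁ h₂ ht, ht, rfl⟩)

theorem exists_homing_testCase_of_not_mem_interSurv [Finite I] [Finite O] [Nonempty I]
    [Nonempty O] (ho : M.Observable) {s₁ s₂ : S} {k : ℕ} (h : (s₁, s₂) ∉ M.interSurv k) :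
    ∃ (Q : Type) (_ : Fintype Q) (P : FSM Q I O) (q0 : Q),
      P.IsTestCase q0 ∧ IsHomingFor M {s₁, s₂} P q0 ∧ ∀ γ q, P.Runs q0 γ q → γ.length ≤ k := by
  obtain ⟨σ, hσ⟩ := M.exists_isHomingStrategy
  exact (isTestLanguage_strategyLanguage ho).exists_homing_testCase
    (fun _ hγ hmax => strategyLanguage_homes ho hγ hmax) (fun _ hγ => hσ.length_le ho h hγ)

end Strategy

end FSM

theorem adaptively_homing_pair_height_bound_general
    {S I O : Type} [Fintype S] [Fintype I] [Fintype O]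
    (M : FSM S I O) (ho : M.Observable) (s₁ s₂ : S)
    (hp : M.AdaptivelyHomingPair s₁ s₂) :
    ∃ (Q : Type) (_ : Fintype Q) (P : FSM Q I O) (q0 : Q),
      P.IsTestCase q0 ∧ FSM.IsHomingFor M {s₁, s₂} P q0 ∧
      ∀ (γ : List (I × O)) (q : Q), P.Runs q0 γ q →
        γ.length ≤ Fintype.card S * (Fintype.card S - 1) / 2 := by
  obtain ⟨Q, _, P, q₀, hP, hhom⟩ := hp
  rcases eq_or_ne s₁ s₂ with rfl | hne
  · refine FSM.isTestLanguage_singleton_nil.exists_homing_testCase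
      (fun γ hγ _ => ⟨s₁, fun s' hs' t ht => ?_⟩) (fun γ hγ => by rw [hγ]; exact Nat.zero_le _)
    cases hγ
    cases ht
    simpa using hs'
  obtain ⟨i, o, -, -⟩ : ∃ i o q, P.h q₀ i o q := by
    by_contra! hd
    obtain ⟨s, hs⟩ := hhom [] q₀ (.nil q₀) hd
    exact hne ((hs s₁ (by simp) s₁ (.nil s₁)).trans (hs s₂ (by simp) s₂ (.nil s₂)).symm)
  have : Nonempty I := ⟨i⟩
  have : Nonempty O := ⟨o⟩
  have hdel : (s₁, s₂) ∉ M.interSurv (Nat.card Q) :=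
    M.not_mem_interSurv_of_isHomingFor hP.outputComplete
      (fun _ _ h => (h.length_lt_ncard hP.acyclic).trans_le (Set.ncard_le_card _)) hhom
  exact FSM.exists_homing_testCase_of_not_mem_interSurv ho
    fun h => hdel (M.interSurv_half_subset _ h)

/-- an adaptively homing pair of a complete observable FSM with `n` states
admits a homing test case whose height (length of the longest trace from the initial state
to a deadlock state) is at most `n(n-1)/2`. -/
theorem adaptively_homing_pair_height_bound
    {S I O : Type} [Fintype S] [Fintype I] [Fintype O]
    (M : FSM S I O) (hc : M.Complete) (ho : M.Observable) (s₁ s₂ : S)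
    (hp : M.AdaptivelyHomingPair s₁ s₂) :
    ∃ (Q : Type) (_ : Fintype Q) (P : FSM Q I O) (q0 : Q),
      P.IsTestCase q0 ∧ FSM.IsHomingFor M {s₁, s₂} P q0 ∧
      ∀ (γ : List (I × O)) (q : Q), P.Runs q0 γ q →
        γ.length ≤ Fintype.card S * (Fintype.card S - 1) / 2 :=
  adaptively_homing_pair_height_bound_general M ho s₁ s₂ hp
end
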